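/- arXiv:1811.02055 — 4 statements merged into one kernel-verified Lean document; each statement's English description precedes it below -/
import Mathlib

section
/- With d_{r,s} as above (coefficients of the Laurent expansion of (1-2x₁+x₁²)/(x₂-2x₁+x₁²) in the region |x₁|<|x₂|), the sign of each nonzero coefficient d_{r,s} is (-1)^{r+s+1}; that is, (-1)^{r+s+1}·d_{r,s} ≥ 0 for all integers r, s. -/
open Finset

/-- Binomial coefficient with integer arguments, zero outside `0 ≤ k ≤ n`. -/
noncomputable def Cb (n k : ℤ) : ℚ :=
  if 0 ≤ k ∧ k ≤ n then (n.toNat.choose k.toNat : ℚ) else 0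

/-- Coefficient of `x₁^r x₂^s` in the Laurent expansion of `1/(x₂ - 2x₁ + x₁²)`
valid for `|x₁| < |x₂|`:  `e_{r,-k} = (-1)^{r-k+1} 2^{2k-2-r} C(k-1, 2k-2-r)`. -/
noncomputable def eCoef (r s : ℤ) : ℚ :=
  (-1 : ℚ) ^ (r + s + 1) * (2 : ℚ) ^ (-2 * s - 2 - r) * Cb (-s - 1) (-2 * s - 2 - r)

/-- Coefficient of `x₁^r x₂^s` in the Laurent expansion of
`(1 - 2x₁ + x₁²)/(x₂ - 2x₁ + x₁²)` valid for `|x₁| < |x₂|`. -/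
noncomputable def dCoef (r s : ℤ) : ℚ :=
  eCoef r s - 2 * eCoef (r - 1) s + eCoef (r - 2) s

lemma Cb_nonneg (n k : ℤ) : 0 ≤ Cb n k := by
  unfold Cb; split <;> positivity

lemma neg_one_zpow_mul (a b : ℤ) :
    ((-1 : ℚ)) ^ a * (-1 : ℚ) ^ b = (-1 : ℚ) ^ (a + b) := by
  rw [← zpow_add₀ (by norm_num : (-1 : ℚ) ≠ 0)]

lemma neg_one_zpow_even (a : ℤ) : ((-1 : ℚ)) ^ (2 * a) = 1 := by
  rw [zpow_mul]; norm_num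

lemma neg_one_zpow_odd (a : ℤ) : ((-1 : ℚ)) ^ (2 * a + 1) = -1 := by
  rw [zpow_add₀ (by norm_num : (-1 : ℚ) ≠ 0), neg_one_zpow_even]; norm_num

/-- Each Laurent coefficient `d_{r,s}` of `(1-2x₁+x₁²)/(x₂-2x₁+x₁²)` (expanded for
`|x₁|<|x₂|`) has sign `(-1)^{r+s+1}`. -/
theorem stmt1 (r s : ℤ) : 0 ≤ (-1 : ℚ) ^ (r + s + 1) * dCoef r s := by
  set m : ℤ := -2 * s - 2 - r with hm
  have h1 : -2 * s - 2 - (r - 1) = m + 1 := by rw [hm]; ring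
  have h2 : -2 * s - 2 - (r - 2) = m + 2 := by rw [hm]; ring
  have s0 : ((-1 : ℚ)) ^ (r + s + 1) * (-1 : ℚ) ^ (r + s + 1) = 1 := by
    rw [neg_one_zpow_mul]
    have : (r + s + 1) + (r + s + 1) = 2 * (r + s + 1) := by ring
    rw [this, neg_one_zpow_even]
  have s1 : ((-1 : ℚ)) ^ (r + s + 1) * (-1 : ℚ) ^ (r - 1 + s + 1) = -1 := by
    rw [neg_one_zpow_mul]
    have : (r + s + 1) + (r - 1 + s + 1) = 2 * (r + s) + 1 := by ring
    rw [this, neg_one_zpow_odd]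
  have s2 : ((-1 : ℚ)) ^ (r + s + 1) * (-1 : ℚ) ^ (r - 2 + s + 1) = 1 := by
    rw [neg_one_zpow_mul]
    have : (r + s + 1) + (r - 2 + s + 1) = 2 * (r + s) := by ring
    rw [this, neg_one_zpow_even]
  have key : (-1 : ℚ) ^ (r + s + 1) * dCoef r s =
      (2 : ℚ) ^ m * Cb (-s - 1) m + 2 * ((2 : ℚ) ^ (m + 1) * Cb (-s - 1) (m + 1))
        + (2 : ℚ) ^ (m + 2) * Cb (-s - 1) (m + 2) := by
    unfold dCoef eCoef
    rw [h1, h2, ← hm]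
    linear_combination ((2 : ℚ) ^ m * Cb (-s - 1) m) * s0
      - (2 * ((2 : ℚ) ^ (m + 1) * Cb (-s - 1) (m + 1))) * s1
      + ((2 : ℚ) ^ (m + 2) * Cb (-s - 1) (m + 2)) * s2
  rw [key]
  have p0 := Cb_nonneg (-s - 1) m
  have p1 := Cb_nonneg (-s - 1) (m + 1)
  have p2 := Cb_nonneg (-s - 1) (m + 2)
  have q0 : (0 : ℚ) < (2 : ℚ) ^ m := by positivity
  have q1 : (0 : ℚ) < (2 : ℚ) ^ (m + 1) := by positivity
  have q2 : (0 : ℚ) < (2 : ℚ) ^ (m + 2) := by positivity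
  nlinarith [mul_nonneg q0.le p0, mul_nonneg q1.le p1, mul_nonneg q2.le p2]
end

section
/- Let d_{r,s} and e_{r,s} be the coefficients of the Laurent expansions (for |x₁|<|x₂|) of f = (1-2x₁+x₁²)/(x₂-2x₁+x₁²) and g = 1/(x₂-2x₁+x₁²) respectively. Then, with g = (f - 1)/(1 - x₂), for all integers r > 0 and s one has Σ_{t=-∞}^{s} d_{r,t} = e_{r,s} (a finite sum since d_{r,t} = 0 for t < -r-1), and for r = 0 and s ≥ -1 one has Σ_{t ≤ s} d_{0,t} = 1 while e_{0,s} is the coefficient of x₁⁰ in the expansion of 1/x₂·1/(1-2x₁/x₂+x₁²/x₂). In particular, for r > 0 the partial sum Σ_{t ≤ s} d_{r,t} has sign (-1)^{r+s+1}. -/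
open Finset

lemma Cb_pascal (n k : ℤ) (hn : 0 ≤ n) : Cb (n+1) (k+1) = Cb n k + Cb n (k+1) := by
  unfold Cb
  rcases lt_or_ge k 0 with hk | hk
  · rcases eq_or_lt_of_le (by omega : k + 1 ≤ 0) with h0 | h0
    · rw [if_pos ⟨le_of_eq h0.symm, by omega⟩, if_neg (by omega), if_pos ⟨le_of_eq h0.symm, by omega⟩]
      have : (k+1).toNat = 0 := by omega
      simp [this]
    · rw [if_neg (by omega), if_neg (by omega), if_neg (by omega)]; ring
  · rcases lt_trichotomy k n with h | h | h
    · rw [if_pos ⟨by omega, by omega⟩, if_pos ⟨hk, by omega⟩, if_pos ⟨by omega, by omega⟩]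
      have h1 : (n+1).toNat = n.toNat + 1 := by omega
      have h2 : (k+1).toNat = k.toNat + 1 := by omega
      rw [h1, h2, Nat.choose_succ_succ]
      push_cast; ring
    · subst h
      rw [if_pos ⟨by omega, le_refl _⟩, if_pos ⟨hk, le_refl _⟩, if_neg (by omega)]
      have h1 : (k+1).toNat = k.toNat + 1 := by omega
      simp [h1, Nat.choose_self]
    · rw [if_neg (by omega), if_neg (by omega), if_neg (by omega)]; ring

lemma eCoef_zero_low (r s : ℤ) (h : s < -r - 1) : eCoef r s = 0 := by
  unfold eCoef Cb
  rw [if_neg (by omega)]; ring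

lemma eCoef_zero_high (r s : ℤ) (h : 0 ≤ s) : eCoef r s = 0 := by
  unfold eCoef Cb
  rw [if_neg (by omega)]; ring

lemma eCoef_zero_neg_exp (r s : ℤ) (h : -2*s - 2 - r < 0) : eCoef r s = 0 := by
  unfold eCoef Cb
  rw [if_neg (by omega)]; ring

lemma eCoef_step (r s : ℤ) (hs : s ≤ -1) :
    eCoef r (s - 1) = 2 * eCoef (r - 1) s - eCoef (r - 2) s := by
  have hne : (-1 : ℚ) ≠ 0 := by norm_num
  have h2 : (2 : ℚ) ≠ 0 := by norm_num
  unfold eCoef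
  have e1 : r + (s - 1) + 1 = r + s := by ring
  have e2 : -2 * (s - 1) - 2 - r = (-2*s - 2 - r) + 2 := by ring
  have e3 : r - 1 + s + 1 = r + s := by ring
  have e4 : -2 * s - 2 - (r - 1) = (-2*s - 2 - r) + 1 := by ring
  have e5 : r - 2 + s + 1 = (r + s) + (-1) := by ring
  have e6 : -2 * s - 2 - (r - 2) = (-2*s - 2 - r) + 2 := by ring
  have e7 : -(s - 1) - 1 = (-s - 1) + 1 := by ring
  rw [e1, e2, e3, e4, e5, e6, e7]
  rw [show (-2*s - 2 - r) + 2 = ((-2*s - 2 - r) + 1) + 1 from by ring]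
  rw [Cb_pascal (-s - 1) ((-2*s - 2 - r) + 1) (by omega)]
  rw [zpow_add_one₀ h2 ((-2*s-2-r)+1), zpow_add_one₀ h2 (-2*s-2-r),
    zpow_add₀ hne (r+s) (-1)]
  norm_num
  ring

lemma Icc_succ_right' (a b : ℤ) (h : a ≤ b + 1) :
    Finset.Icc a (b+1) = insert (b+1) (Finset.Icc a b) := by
  ext x; simp; omega

lemma part1 (r : ℤ) (hr : 0 < r) (s : ℤ) :
    ∑ t ∈ Finset.Icc (-r - 1) s, dCoef r t = eCoef r s := by
  rcases lt_or_ge s (-r - 1) with h | h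
  · rw [Finset.Icc_eq_empty (by omega), Finset.sum_empty, eCoef_zero_low r s h]
  · refine Int.le_induction
      (motive := fun s _ => ∑ t ∈ Finset.Icc (-r - 1) s, dCoef r t = eCoef r s) ?_ ?_ s h
    · show ∑ t ∈ Finset.Icc (-r - 1) (-r - 1), dCoef r t = eCoef r (-r - 1)
      rw [Finset.Icc_self, Finset.sum_singleton]
      unfold dCoef
      rw [eCoef_zero_low (r-1) (-r-1) (by omega), eCoef_zero_low (r-2) (-r-1) (by omega)]
      ring
    · intro s hs ih
      show ∑ t ∈ Finset.Icc _ (s + 1), dCoef _ t = _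
      rw [Icc_succ_right' _ _ (by omega), Finset.sum_insert (by simp), ih]
      have key : eCoef r s = 2 * eCoef (r-1) (s+1) - eCoef (r-2) (s+1) := by
        rcases le_or_gt (s+1) (-1) with h1 | h1
        · have := eCoef_step r (s+1) h1
          simpa using this
        · rw [eCoef_zero_high (r-1) (s+1) (by omega), eCoef_zero_high (r-2) (s+1) (by omega)]
          rcases eq_or_lt_of_le (by omega : -1 ≤ s) with h2 | h2
          · rw [← h2, eCoef_zero_neg_exp r (-1) (by omega)]; ring
          · rw [eCoef_zero_high r s (by omega)]; ring
      unfold dCoef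
      rw [key]; ring

/-- Partial row sums of the `d` coefficients give the `e` coefficients: since
`g = (f-1)/(1-x₂)`, for `r > 0` one has `Σ_{t ≤ s} d_{r,t} = e_{r,s}` (the sum is finite
as `d_{r,t} = 0` for `t < -r-1`), for `r = 0` and `s ≥ -1` one has `Σ_{t ≤ s} d_{0,t} = 1`,
and in particular for `r > 0` the partial sum has sign `(-1)^{r+s+1}`. -/
theorem stmt4 :
    (∀ r s : ℤ, 0 < r → ∑ t ∈ Finset.Icc (-r - 1) s, dCoef r t = eCoef r s) ∧
    (∀ s : ℤ, -1 ≤ s → ∑ t ∈ Finset.Icc (-(0 : ℤ) - 1) s, dCoef 0 t = 1) ∧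
    (∀ r s : ℤ, 0 < r →
      0 ≤ (-1 : ℚ) ^ (r + s + 1) * ∑ t ∈ Finset.Icc (-r - 1) s, dCoef r t) := by
  refine ⟨fun r s hr => part1 r hr s, ?_, ?_⟩
  · intro s hs
    have h0 : (-(0:ℤ) - 1) = -1 := by norm_num
    rw [h0]
    refine Int.le_induction
      (motive := fun s _ => ∑ t ∈ Finset.Icc (-1 : ℤ) s, dCoef 0 t = 1) ?_ ?_ s hs
    · show ∑ t ∈ Finset.Icc (-1 : ℤ) (-1), dCoef 0 t = 1
      rw [Finset.Icc_self, Finset.sum_singleton]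
      unfold dCoef
      rw [eCoef_zero_low (0-1) (-1) (by omega), eCoef_zero_low (0-2) (-1) (by omega)]
      unfold eCoef Cb
      norm_num
    · intro s hs ih
      show ∑ t ∈ Finset.Icc _ (s + 1), dCoef _ t = _
      rw [Icc_succ_right' _ _ (by omega), Finset.sum_insert (by simp), ih]
      unfold dCoef
      rw [eCoef_zero_high 0 (s+1) (by omega), eCoef_zero_high (0-1) (s+1) (by omega),
        eCoef_zero_high (0-2) (s+1) (by omega)]
      ring
  · intro r s hr
    rw [part1 r hr s]
    have hc := Cb_nonneg (-s - 1) (-2*s - 2 - r)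
    have hp : (0:ℚ) < (2:ℚ) ^ (-2*s - 2 - r) := zpow_pos (by norm_num) _
    unfold eCoef
    rcases Int.even_or_odd (r + s + 1) with he | he
    · rw [he.neg_one_zpow]; nlinarith
    · rw [Odd.neg_one_zpow he]; nlinarith
end

section
/- Let g_I be defined by the iterated residue formula g_I(α₁,…,α_k;β₁,…,β_l) = Res_{z₁=0,∞}⋯Res_{z_r=0,∞}( ∏_j (1-z_j)^{I_j-j} ∏_{i>j}(1-z_i/z_j) M(z) ) with M as in the paper. If the last entry p of the sequence (I,p) satisfies p ≤ 0, then g_{I,p} = g_I. The key computation is: Res_{z_r=0} [ (1-z_r)^{p-r} ∏_{i=1}^{r-1}(1 - z_r/z_i) · ∏_{i=1}^l (1-z_rβ_i)/(∏_{i=1}^k(1-z_rα_i)(1-z_r)^{l-k}) · dz_r/z_r ] = 1, while the residue of the same form at z_r = ∞ vanishes (for p ≤ 0). -/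
open Finset

/-- The residue of `f` at the point `a`, defined as the limit as `ε → 0⁺` of
`(2πi)⁻¹ ∮_{|z-a|=ε} f`. -/
noncomputable def residue (f : ℂ → ℂ) (a : ℂ) : ℂ :=
  Filter.limUnder (nhdsWithin (0 : ℝ) (Set.Ioi 0))
    (fun ε => (2 * (Real.pi : ℂ) * Complex.I)⁻¹ * circleIntegral f a ε)

/-- The residue of the 1-form `f(z) dz` at `z = ∞`:
`Res_{z=∞} f dz = - Res_{w=0} f(1/w)/w² dw`. -/
noncomputable def resInf (f : ℂ → ℂ) : ℂ :=
  - residue (fun w => f w⁻¹ * (w ^ 2)⁻¹) 0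

/-- Sum of the residues of `f(z) dz` at `z = 0` and `z = ∞`. -/
noncomputable def res0inf (f : ℂ → ℂ) : ℂ :=
  residue f 0 + resInf f

/-- Iterated residue operation `Res_{z₁=0,∞} ⋯ Res_{z_r=0,∞}`, taking the innermost
residue in the last variable first. -/
noncomputable def iterRes : (r : ℕ) → ((Fin r → ℂ) → ℂ) → ℂ
  | 0, F => F (fun i => i.elim0)
  | r + 1, F => iterRes r (fun z => res0inf (fun w => F (Fin.snoc z w)))

/-- The factor of `M_{k,l}` corresponding to one variable `z`, including `dz/z`. -/
noncomputable def Mfac {k l : ℕ} (α : Fin k → ℂ) (β : Fin l → ℂ) (z : ℂ) : ℂ :=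
  (∏ i, (1 - z * β i)) / ((∏ i, (1 - z * α i)) * (1 - z) ^ ((l : ℤ) - (k : ℤ))) * z⁻¹

/-- The integrand of the iterated-residue formula for the Grothendieck polynomial `g_I`. -/
noncomputable def gInt {r k l : ℕ} (I : Fin r → ℤ) (α : Fin k → ℂ) (β : Fin l → ℂ)
    (z : Fin r → ℂ) : ℂ :=
  (∏ j, (1 - z j) ^ (I j - ((j : ℕ) : ℤ) - 1)) *
  (∏ i, ∏ j ∈ Finset.univ.filter (fun j => j < i), (1 - z i / z j)) *
  ∏ j, Mfac α β (z j)

/-- The Grothendieck polynomial `g_I(α;β)` in iterated residue form, for an integer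
sequence `I` given as a list. -/
noncomputable def gRes {k l : ℕ} (I : List ℤ) (α : Fin k → ℂ) (β : Fin l → ℂ) : ℂ :=
  iterRes I.length (gInt (fun j => I.get j) α β)

/-!
Appending `p` to `I` adds an innermost variable `w`, and the integrand factors as the integrand
of `g_I` times a form in `w` alone. That form is `h(w) dw/w` with `h` holomorphic at `0` and
`h(0) = 1`, so by Cauchy's integral formula its residue at `0` is `1`. After `w = 1/u` the form at
infinity becomes `u ^ (-p)` times a function holomorphic at `u = 0`, so for `p ≤ 0` Cauchy's theorem
kills the residue at `∞`. Hence the innermost `Res_{w=0,∞}` returns the integrand of `g_I`.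
-/

open Filter Metric Topology

section Residue

variable {f g h : ℂ → ℂ} {a c : ℂ}

lemma residue_eq_of_eventually_eq
    (hf : ∀ᶠ ε in 𝓝[>] (0 : ℝ), (2 * (Real.pi : ℂ) * Complex.I)⁻¹ * circleIntegral f a ε = c) :
    residue f a = c :=
  (tendsto_const_nhds.congr' (hf.mono fun _ hε => hε.symm)).limUnder_eq

lemma residue_congr (hfg : f =ᶠ[𝓝[≠] a] g) : residue f a = residue g a := by
  obtain ⟨δ, hδ, hball⟩ := eventually_nhds_iff_ball.mp (eventually_nhdsWithin_iff.mp hfg)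
  refine congrArg lim (Filter.map_congr ?_)
  filter_upwards [Ioo_mem_nhdsGT hδ] with ε hε
  rw [circleIntegral.integral_congr hε.1.le fun w hw =>
    hball w (sphere_subset_ball hε.2 hw) (ne_of_mem_sphere hw hε.1.ne')]

lemma eventually_diffContOnCl_ball (hh : ∀ᶠ w in 𝓝 a, DifferentiableAt ℂ h w) :
    ∀ᶠ ε in 𝓝[>] (0 : ℝ), DiffContOnCl ℂ h (ball a ε) := by
  obtain ⟨δ, hδ, hball⟩ := eventually_nhds_iff_ball.mp hh
  filter_upwards [Ioo_mem_nhdsGT hδ] with ε hε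
  refine DifferentiableOn.diffContOnCl fun w hw => (hball w ?_).differentiableWithinAt
  exact (closure_ball_subset_closedBall.trans (closedBall_subset_ball hε.2)) hw

lemma residue_eq_zero_of_differentiableAt (hh : ∀ᶠ w in 𝓝 a, DifferentiableAt ℂ h w) :
    residue h a = 0 := by
  refine residue_eq_of_eventually_eq ?_
  filter_upwards [eventually_diffContOnCl_ball hh, self_mem_nhdsWithin] with ε hε hε0
  rw [hε.circleIntegral_eq_zero (le_of_lt hε0), mul_zero]

lemma residue_mul_inv_sub (hh : ∀ᶠ w in 𝓝 a, DifferentiableAt ℂ h w) :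
    residue (fun w => h w * (w - a)⁻¹) a = h a := by
  refine residue_eq_of_eventually_eq ?_
  filter_upwards [eventually_diffContOnCl_ball hh, self_mem_nhdsWithin] with ε hε hε0
  simpa [mul_comm] using hε.two_pi_i_inv_smul_circleIntegral_sub_inv_smul (mem_ball_self hε0)

lemma resInf_eq_zero_of_eventuallyEq (hfG : (fun w => f w⁻¹ * (w ^ 2)⁻¹) =ᶠ[𝓝[≠] 0] g)
    (hg : ∀ᶠ w in 𝓝 0, DifferentiableAt ℂ g w) : resInf f = 0 := by
  rw [resInf, residue_congr hfG, residue_eq_zero_of_differentiableAt hg, neg_zero]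

end Residue

lemma prod_one_sub_inv_mul {ι K : Type*} [Field K] (s : Finset ι) (d : ι → K) {w : K}
    (hw : w ≠ 0) : ∏ i ∈ s, (1 - w⁻¹ * d i) = (∏ i ∈ s, (w - d i)) / w ^ s.card := by
  rw [eq_div_iff (pow_ne_zero _ hw), ← Finset.prod_const, ← Finset.prod_mul_distrib]
  refine Finset.prod_congr rfl fun i _ => ?_
  field_simp

section LastVariable

variable {n k l : ℕ} (α : Fin k → ℂ) (β : Fin l → ℂ) (z : Fin n → ℂ)

noncomputable def lastVarForm (p : ℤ) (w : ℂ) : ℂ :=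
  (1 - w) ^ (p - ((n : ℤ) + 1)) * (∏ i, (1 - w / z i)) * Mfac α β w

lemma gInt_snoc (J : Fin n → ℤ) (p : ℤ) (w : ℂ) :
    gInt (Fin.snoc J p) α β (Fin.snoc z w) = gInt J α β z * lastVarForm α β z p w := by
  simp only [gInt, lastVarForm, Finset.filter_gt_eq_Iio, Fin.prod_univ_castSucc,
    ← Fin.map_castSuccEmb_Iio, Fin.Iio_last_eq_map, Finset.prod_map, Fin.castSuccEmb_apply,
    Fin.snoc_castSucc, Fin.snoc_last, Fin.val_castSucc, Fin.val_last]
  rw [sub_sub]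
  ring

lemma residue_const_mul_lastVarForm (p : ℤ) (c : ℂ) :
    residue (fun w => c * lastVarForm α β z p w) 0 = c := by
  set h : ℂ → ℂ := fun w => c * ((1 - w) ^ (p - ((n : ℤ) + 1)) * (∏ i, (1 - w / z i)) *
    ((∏ i, (1 - w * β i)) / ((∏ i, (1 - w * α i)) * (1 - w) ^ ((l : ℤ) - (k : ℤ)))))
  have hform : (fun w => c * lastVarForm α β z p w) = fun w => h w * (w - 0)⁻¹ := by
    funext w
    simp only [h, lastVarForm, Mfac, sub_zero]
    ring
  have hone : ∀ᶠ w in 𝓝 (0 : ℂ), 1 - w ≠ 0 :=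
    (continuous_const.sub continuous_id).continuousAt.eventually_ne (by simp)
  have hden : ∀ᶠ w in 𝓝 (0 : ℂ), ∏ i, (1 - w * α i) ≠ 0 :=
    (by fun_prop : Continuous fun w : ℂ => ∏ i, (1 - w * α i)).continuousAt.eventually_ne
      (by simp)
  have hdiff : ∀ᶠ w in 𝓝 (0 : ℂ), DifferentiableAt ℂ h w := by
    filter_upwards [hone, hden] with w hw1 hwα
    simp only [h]
    fun_prop (disch := simp [hw1, hwα, zpow_ne_zero])
  rw [hform, residue_mul_inv_sub hdiff]
  simp [h]

lemma resInf_const_mul_lastVarForm (hα : ∀ i, α i ≠ 0) {p : ℤ} (hp : p ≤ 0) (c : ℂ) :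
    resInf (fun w => c * lastVarForm α β z p w) = 0 := by
  obtain ⟨b, rfl⟩ : ∃ b : ℕ, p = -b := ⟨(-p).toNat, by omega⟩
  -- `G u = u⁻² · (form at u⁻¹)`: the powers of `u` collect to `u ^ b = u ^ (-p)`.
  set G : ℂ → ℂ := fun u => c * (∏ i, (u - (z i)⁻¹)) * (∏ i, (u - β i)) * (u - 1) ^ k * u ^ b /
    ((∏ i, (u - α i)) * (u - 1) ^ (b + n + 1 + l))
  have hone : ∀ᶠ w in 𝓝 (0 : ℂ), w - 1 ≠ 0 :=
    (continuous_id.sub continuous_const).continuousAt.eventually_ne (by simp)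
  have hden : ∀ᶠ w in 𝓝 (0 : ℂ), ∏ i, (w - α i) ≠ 0 :=
    (by fun_prop : Continuous fun w : ℂ => ∏ i, (w - α i)).continuousAt.eventually_ne
      (by simpa [Finset.prod_ne_zero_iff] using hα)
  refine resInf_eq_zero_of_eventuallyEq (g := G) ?_ ?_
  · filter_upwards [self_mem_nhdsWithin, nhdsWithin_le_nhds hone, nhdsWithin_le_nhds hden]
      with w (hw0 : w ≠ 0) hw1 hwα
    have hinv : 1 - w⁻¹ = (w - 1) / w := by rw [sub_div, div_self hw0, one_div]
    have hexp : -(b : ℤ) - ((n : ℤ) + 1) = -((b + n + 1 : ℕ) : ℤ) := by push_cast; ring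
    simp only [lastVarForm, Mfac, inv_inv, div_eq_mul_inv w⁻¹, prod_one_sub_inv_mul _ _ hw0,
      Finset.card_univ, Fintype.card_fin, hexp, zpow_neg, zpow_natCast, hinv, G]
    rw [zpow_sub₀ (div_ne_zero hw1 hw0), zpow_natCast, zpow_natCast]
    simp only [div_pow]
    field_simp
    ring
  · filter_upwards [hone, hden] with w hw1 hwα
    fun_prop (disch := simp [hw1, hwα])

end LastVariable

section GrothendieckResidue

variable {k l : ℕ} (α : Fin k → ℂ) (β : Fin l → ℂ)

lemma res0inf_const_mul_lastVarForm {n : ℕ} (z : Fin n → ℂ) (hα : ∀ i, α i ≠ 0) {p : ℤ}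
    (hp : p ≤ 0) (c : ℂ) : res0inf (fun w => c * lastVarForm α β z p w) = c := by
  rw [res0inf, residue_const_mul_lastVarForm, resInf_const_mul_lastVarForm α β z hα hp, add_zero]

lemma gRes_eq_iterRes {L : List ℤ} {r : ℕ} (h : L.length = r) :
    gRes L α β = iterRes r (gInt (fun j => L.get (Fin.cast h.symm j)) α β) := by
  subst h
  rfl

lemma gRes_append_singleton (I : List ℤ) (p : ℤ) :
    gRes (I ++ [p]) α β = iterRes I.length
      (fun z => res0inf (fun w => gInt (fun j => I.get j) α β z * lastVarForm α β z p w)) := by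
  have hseq : (fun j => (I ++ [p]).get (Fin.cast (by simp) j)) =
      (Fin.snoc (fun j => I.get j) p : Fin (I.length + 1) → ℤ) := by
    funext j
    refine Fin.lastCases ?_ (fun j => ?_) j <;> simp [List.getElem_append_left]
  rw [gRes_eq_iterRes α β (by simp : (I ++ [p]).length = I.length + 1), hseq]
  simp only [iterRes, gInt_snoc]

end GrothendieckResidue

/-- For `p ≤ 0` one has `g_{I,p} = g_I`.  The key computation: with `n` outer variables
`z₁,…,z_n` fixed (nonzero), the residue at `z_{n+1} = 0` of
`(1-z_{n+1})^{p-(n+1)} ∏ᵢ(1 - z_{n+1}/zᵢ) · M_{k,l}(z_{n+1}) dz_{n+1}/z_{n+1}` equals `1`,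
while the residue of the same form at `z_{n+1} = ∞` vanishes. -/
theorem stmt10 :
    (∀ (k l : ℕ) (α : Fin k → ℂ) (β : Fin l → ℂ), (∀ i, α i ≠ 0) → (∀ i, β i ≠ 0) →
      ∀ (I : List ℤ) (p : ℤ), p ≤ 0 → gRes (I ++ [p]) α β = gRes I α β) ∧
    (∀ (k l : ℕ) (α : Fin k → ℂ) (β : Fin l → ℂ), (∀ i, α i ≠ 0) → (∀ i, β i ≠ 0) →
      ∀ (n : ℕ) (z : Fin n → ℂ) (p : ℤ), (∀ i, z i ≠ 0) → p ≤ 0 →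
      residue (fun w => (1 - w) ^ (p - ((n : ℤ) + 1)) * (∏ i, (1 - w / z i)) * Mfac α β w) 0
          = 1 ∧
      resInf (fun w => (1 - w) ^ (p - ((n : ℤ) + 1)) * (∏ i, (1 - w / z i)) * Mfac α β w)
          = 0) := by
  refine ⟨fun k l α β hα _ I p hp => ?_, fun k l α β hα _ n z p _ hp => ⟨?_, ?_⟩⟩
  · simp only [gRes_append_singleton, res0inf_const_mul_lastVarForm α β _ hα hp]
    rfl
  · simpa [lastVarForm] using residue_const_mul_lastVarForm α β z p 1
  · simpa [lastVarForm] using resInf_const_mul_lastVarForm α β z hα hp 1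
end

section
/- For every integer l ≥ 0 and every integer r with 0 < r ≤ 2l+2, the 'swept' coefficient D_{r,-l-2,l} := Σ_{t=-r-1}^{-l-2} d_{r,t} (where d_{r,t} are the Laurent coefficients of (1-2x₁+x₁²)/(x₂-2x₁+x₁²) in |x₁|<|x₂|) has sign (-1)^{r+(-l-2)+1} = (-1)^{r+l+1}; i.e. (-1)^{r+l+1}·Σ_{t=-r-1}^{-l-2} d_{r,t} ≥ 0. -/
open Finset

/-! The swept sum telescopes. Writing `e_{r,s}` for the coefficients of `1/(x₂ - 2x₁ + x₁²)`,
Pascal's rule turns `d_{r,t} = e_{r,t} - 2e_{r-1,t} + e_{r-2,t}` into `e_{r,t} - e_{r,t-1}`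
for `t ≤ -1`, and `e_{r,t} = 0` for `t ≤ -r-2`; so `Σ_{t=-r-1}^{s} d_{r,t} = e_{r,s}` (the
effect of multiplying by `1/(1 - x₂)`), and the closed form of `e_{r,s}` has sign
`(-1)^{r+s+1}`. -/

lemma Cb_natCast (n k : ℕ) : Cb n k = n.choose k := by
  unfold Cb
  split_ifs with h
  · simp
  · rw [Nat.choose_eq_zero_of_lt (by omega), Nat.cast_zero]

lemma Cb_of_neg (n : ℤ) {k : ℤ} (hk : k < 0) : Cb n k = 0 :=
  if_neg (by omega)

lemma Cb_of_lt {n k : ℤ} (hnk : n < k) : Cb n k = 0 :=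
  if_neg (by omega)

lemma Cb_add_one_add_one {n : ℤ} (hn : 0 ≤ n) (k : ℤ) :
    Cb (n + 1) (k + 1) = Cb n k + Cb n (k + 1) := by
  lift n to ℕ using hn
  rcases lt_trichotomy k (-1) with hk | rfl | hk
  · rw [Cb_of_neg _ (by omega), Cb_of_neg _ (by omega), Cb_of_neg _ (by omega), add_zero]
  · have hCb_zero (m : ℕ) : Cb m 0 = 1 := by simpa using Cb_natCast m 0
    rw [Cb_of_neg _ (show (-1 : ℤ) < 0 by norm_num), zero_add, neg_add_cancel]
    exact_mod_cast (hCb_zero (n + 1)).trans (hCb_zero n).symm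
  · lift k to ℕ using (by omega)
    exact_mod_cast (Cb_natCast (n + 1) (k + 1)).trans
      (by rw [Nat.choose_succ_succ, Nat.cast_add, ← Cb_natCast, ← Cb_natCast])

lemma eCoef_two_mul_sub (n k : ℤ) :
    eCoef (2 * n - k) (-n - 1) = (-1) ^ (n - k) * 2 ^ k * Cb n k := by
  unfold eCoef
  congr 3 <;> ring

lemma eCoef_eq_zero_of_le {r s : ℤ} (h : s ≤ -r - 2) : eCoef r s = 0 := by
  rw [eCoef, Cb_of_lt (by omega), mul_zero]

lemma neg_one_zpow_mul_eCoef_nonneg (r s : ℤ) : 0 ≤ (-1 : ℚ) ^ (r + s + 1) * eCoef r s := by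
  rw [eCoef, ← mul_assoc, ← mul_assoc, ← mul_zpow]
  norm_num
  exact mul_nonneg (zpow_nonneg (by norm_num) _) (Cb_nonneg _ _)

lemma dCoef_eq_eCoef_sub_eCoef {r t : ℤ} (ht : t ≤ -1) :
    dCoef r t = eCoef r t - eCoef r (t - 1) := by
  obtain ⟨n, k, hn, rfl, rfl⟩ : ∃ n k : ℤ, 0 ≤ n ∧ r = 2 * n - k ∧ t = -n - 1 :=
    ⟨-t - 1, 2 * (-t - 1) - r, by omega, by ring, by ring⟩
  have hshift :
      eCoef (2 * n - k) (-n - 1 - 1) = eCoef (2 * (n + 1) - (k + 1 + 1)) (-(n + 1) - 1) := by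
    congr 1 <;> ring
  rw [dCoef, show 2 * n - k - 1 = 2 * n - (k + 1) by ring,
    show 2 * n - k - 2 = 2 * n - (k + 1 + 1) by ring, hshift,
    eCoef_two_mul_sub, eCoef_two_mul_sub, eCoef_two_mul_sub, eCoef_two_mul_sub,
    Cb_add_one_add_one hn (k + 1)]
  rw [show n - (k + 1) = n - k - 1 by ring, show n - (k + 1 + 1) = n - k - 1 - 1 by ring,
    show n + 1 - (k + 1 + 1) = n - k - 1 by ring]
  simp only [zpow_sub_one₀ (by norm_num : (-1 : ℚ) ≠ 0),
    zpow_add_one₀ (by norm_num : (2 : ℚ) ≠ 0)]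
  ring

lemma sum_Icc_dCoef {r s : ℤ} (hs : s ≤ -1) :
    ∑ t ∈ Icc (-r - 1) s, dCoef r t = eCoef r s := by
  rcases lt_or_ge s (-r - 2) with h | h
  · rw [Icc_eq_empty_of_lt (by omega), sum_empty, eCoef_eq_zero_of_le h.le]
  induction s, h using Int.leInduction with
  | base => rw [Icc_eq_empty_of_lt (by omega), sum_empty, eCoef_eq_zero_of_le le_rfl]
  | succ s hle ih =>
    rw [← insert_Icc_right_eq_Icc_add_one (by omega), sum_insert (by simp), ih (by omega),
      dCoef_eq_eCoef_sub_eCoef hs, add_sub_cancel_right, sub_add_cancel]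

theorem stmt19_general (l r : ℤ) (hl : 0 ≤ l) :
    0 ≤ (-1 : ℚ) ^ (r + l + 1) * ∑ t ∈ Finset.Icc (-r - 1) (-l - 2), dCoef r t := by
  have hsign : (-1 : ℚ) ^ (r + l + 1) = (-1) ^ (r + (-l - 2) + 1) := by
    rw [show r + l + 1 = r + (-l - 2) + 1 + 2 * (l + 1) by ring, zpow_add₀ (by norm_num),
      zpow_mul]
    norm_num
  rw [sum_Icc_dCoef (by omega), hsign]
  exact neg_one_zpow_mul_eCoef_nonneg r (-l - 2)

/-- The swept coefficient `D_{r,-l-2,l} = Σ_{t=-r-1}^{-l-2} d_{r,t}` has sign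
`(-1)^{r+l+1}` for `l ≥ 0` and `0 < r ≤ 2l+2`. -/
theorem stmt19 (l r : ℤ) (hl : 0 ≤ l) (hr : 0 < r) (hr2 : r ≤ 2 * l + 2) :
    0 ≤ (-1 : ℚ) ^ (r + l + 1) * ∑ t ∈ Finset.Icc (-r - 1) (-l - 2), dCoef r t :=
  stmt19_general l r hl
end
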